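/- For every positive integer m and every s ∈ ℂ with Re(s) > 1: 𝒞(2,2m−1;s) = 𝒮(2,2m−1;s) = (1/2)·𝒞(0,1;s); that is, Σ' cos²((2m−1)θ_{p₁,p₂})/(p₁²+p₂²)^s = Σ' sin²((2m−1)θ_{p₁,p₂})/(p₁²+p₂²)^s = (1/2)·Σ' 1/(p₁²+p₂²)^s. -/

import Mathlib

/-- The angle `θ_{p₁,p₂} = arg(p₁ + i p₂)` of a lattice point. -/
noncomputable def latticeAngle (p : ℤ × ℤ) : ℝ :=
  Complex.arg ((p.1 : ℂ) + (p.2 : ℂ) * Complex.I)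

/-- The angular lattice sum `𝒞(n,m;s)`. -/
noncomputable def latC (n m : ℕ) (s : ℂ) : ℂ :=
  ∑' p : {p : ℤ × ℤ // p ≠ 0},
    ((Real.cos ((m : ℝ) * latticeAngle p.1) : ℂ)) ^ n /
      (((p.1.1 : ℂ)) ^ 2 + ((p.1.2 : ℂ)) ^ 2) ^ s

/-- The angular lattice sum `𝒮(n,m;s)`. -/
noncomputable def latS (n m : ℕ) (s : ℂ) : ℂ :=
  ∑' p : {p : ℤ × ℤ // p ≠ 0},
    ((Real.sin ((m : ℝ) * latticeAngle p.1) : ℂ)) ^ n /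
      (((p.1.1 : ℂ)) ^ 2 + ((p.1.2 : ℂ)) ^ 2) ^ s

open Real

/-! The rotation `p ↦ i p` of the Gaussian lattice preserves `p₁² + p₂²` and turns
`θ_p` into `θ_p + π/2`. For odd `n` this maps `sin²(n θ)` to `cos²(n θ)`, since
`n (θ + π/2) = n θ + π/2 + kπ` for an integer `k`; so `𝒞(2,n;s) = 𝒮(2,n;s)`. Adding the two
sums termwise, `cos² + sin² = 1` gives `𝒞(2,n;s) + 𝒮(2,n;s) = 𝒞(0,1;s)`, which needs absolute
convergence for `Re s > 1`, obtained by comparison with the Eisenstein series bound. -/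

theorem sin_sq_odd_mul_eq_cos_sq {n : ℕ} (hn : Odd n) {θ ψ : ℝ}
    (h : (θ : Real.Angle) = ψ + ↑(π / 2)) : sin (n * θ) ^ 2 = cos (n * ψ) ^ 2 := by
  obtain ⟨j, rfl⟩ := hn
  obtain ⟨k, hk⟩ := Real.Angle.angle_eq_iff_two_pi_dvd_sub.mp h
  have hθ : ((2 * j + 1 : ℕ) : ℝ) * θ
      = ((2 * j + 1 : ℕ) * ψ + π / 2) + ((j + 2 * (2 * j + 1) * k : ℤ) : ℝ) * π := by
    rw [show θ = ψ + π / 2 + 2 * π * k by linarith]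
    push_cast; ring
  rw [hθ, sin_add_int_mul_pi, sin_add_pi_div_two, mul_pow, ← sq_abs ((-1 : ℝ) ^ _),
    abs_neg_one_zpow, one_pow, one_mul]

def quarterTurn : ℤ × ℤ ≃ ℤ × ℤ :=
  (Equiv.prodComm ℤ ℤ).trans ((Equiv.neg ℤ).prodCongr (Equiv.refl ℤ))

@[simp]
theorem quarterTurn_apply (p : ℤ × ℤ) : quarterTurn p = (-p.2, p.1) := rfl

def quarterTurnNonzero : {p : ℤ × ℤ // p ≠ 0} ≃ {p : ℤ × ℤ // p ≠ 0} :=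
  quarterTurn.subtypeEquiv fun p => by simp [Prod.ext_iff, and_comm]

theorem latticeAngle_quarterTurn {p : ℤ × ℤ} (hp : p ≠ 0) :
    (latticeAngle (quarterTurn p) : Real.Angle) = latticeAngle p + ↑(π / 2) := by
  have hz : (p.1 : ℂ) + p.2 * Complex.I ≠ 0 := by
    contrapose! hp
    simpa [Complex.ext_iff, Prod.ext_iff] using hp
  have hrot : ((-p.2 : ℤ) : ℂ) + (p.1 : ℂ) * Complex.I
      = Complex.I * (p.1 + p.2 * Complex.I) := by
    push_cast; ring_nf; rw [Complex.I_sq]; ring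
  rw [quarterTurn_apply, latticeAngle, latticeAngle, hrot,
    Complex.arg_mul_coe_angle Complex.I_ne_zero hz, Complex.arg_I, add_comm]

theorem latC_two_eq_latS_two_of_odd {n : ℕ} (hn : Odd n) (s : ℂ) :
    latC 2 n s = latS 2 n s := by
  rw [latC, latS]
  conv_rhs => rw [← quarterTurnNonzero.tsum_eq]
  refine tsum_congr fun p => ?_
  have hangle := sin_sq_odd_mul_eq_cos_sq hn (latticeAngle_quarterTurn p.2)
  have hnorm : ((-p.1.2 : ℤ) : ℂ) ^ 2 + (p.1.1 : ℂ) ^ 2 = (p.1.1 : ℂ) ^ 2 + (p.1.2 : ℂ) ^ 2 := by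
    push_cast; ring
  simp only [quarterTurnNonzero, Equiv.subtypeEquiv_apply, quarterTurn_apply] at hangle ⊢
  rw [hnorm]
  congr 1
  exact_mod_cast hangle.symm

theorem sq_norm_vec_two_le (a b : ℤ) : ‖![a, b]‖ ^ 2 ≤ (a : ℝ) ^ 2 + (b : ℝ) ^ 2 := by
  rw [EisensteinSeries.norm_eq_max_natAbs]
  push_cast
  simp only [Nat.cast_natAbs, Int.cast_abs]
  rcases le_total |(a : ℝ)| |(b : ℝ)| with h | h
  · rw [max_eq_right h, sq_abs]; nlinarith
  · rw [max_eq_left h, sq_abs]; nlinarith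

theorem norm_vec_two_pos (p : {p : ℤ × ℤ // p ≠ 0}) : 0 < ‖![p.1.1, p.1.2]‖ :=
  norm_pos_iff.mpr fun h => p.2 (Prod.ext (congrFun h 0) (congrFun h 1))

theorem sq_add_sq_pos (p : {p : ℤ × ℤ // p ≠ 0}) : 0 < (p.1.1 : ℝ) ^ 2 + (p.1.2 : ℝ) ^ 2 :=
  (pow_pos (norm_vec_two_pos p) 2).trans_le (sq_norm_vec_two_le _ _)

theorem summable_sq_add_sq_rpow_neg {σ : ℝ} (hσ : 1 < σ) :
    Summable fun p : {p : ℤ × ℤ // p ≠ 0} => ((p.1.1 : ℝ) ^ 2 + (p.1.2 : ℝ) ^ 2) ^ (-σ) := by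
  have hinj : Function.Injective fun p : {p : ℤ × ℤ // p ≠ 0} => ![p.1.1, p.1.2] :=
    (finTwoArrowEquiv ℤ).symm.injective.comp Subtype.val_injective
  refine ((EisensteinSeries.summable_one_div_norm_rpow (k := 2 * σ) (by linarith)).comp_injective
    hinj).of_nonneg_of_le (fun p => by positivity) fun p => ?_
  have hpos := norm_vec_two_pos p
  calc ((p.1.1 : ℝ) ^ 2 + (p.1.2 : ℝ) ^ 2) ^ (-σ)
      ≤ (‖![p.1.1, p.1.2]‖ ^ 2) ^ (-σ) :=
        rpow_le_rpow_of_nonpos (by positivity) (sq_norm_vec_two_le _ _) (by linarith)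
    _ = ‖![p.1.1, p.1.2]‖ ^ (-(2 * σ)) := by
        rw [← rpow_natCast, ← rpow_mul hpos.le]; push_cast; ring_nf

theorem summable_div_sq_add_sq_cpow {s : ℂ} (hs : 1 < s.re) {f : {p : ℤ × ℤ // p ≠ 0} → ℂ}
    {C : ℝ} (hf : ∀ p, ‖f p‖ ≤ C) :
    Summable fun p : {p : ℤ × ℤ // p ≠ 0} => f p / ((p.1.1 : ℂ) ^ 2 + (p.1.2 : ℂ) ^ 2) ^ s := by
  refine Summable.of_norm_bounded ((summable_sq_add_sq_rpow_neg hs).mul_left C) fun p => ?_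
  have hR := sq_add_sq_pos p
  have hcast : (p.1.1 : ℂ) ^ 2 + (p.1.2 : ℂ) ^ 2
      = (((p.1.1 : ℝ) ^ 2 + (p.1.2 : ℝ) ^ 2 : ℝ) : ℂ) := by
    push_cast; ring
  rw [hcast, norm_div, Complex.norm_cpow_eq_rpow_re_of_pos hR, rpow_neg hR.le, div_eq_mul_inv]
  exact mul_le_mul_of_nonneg_right (hf p) (by positivity)

theorem norm_ofReal_sq_le_one {x : ℝ} (hx : |x| ≤ 1) : ‖(x : ℂ) ^ 2‖ ≤ 1 := by
  rw [norm_pow, Complex.norm_real, norm_eq_abs]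
  exact pow_le_one₀ (abs_nonneg x) hx

theorem latC_two_add_latS_two (n : ℕ) {s : ℂ} (hs : 1 < s.re) :
    latC 2 n s + latS 2 n s = latC 0 1 s := by
  have hC := summable_div_sq_add_sq_cpow hs (f := fun p => (cos (n * latticeAngle p.1) : ℂ) ^ 2)
    fun p => norm_ofReal_sq_le_one (abs_cos_le_one _)
  have hS := summable_div_sq_add_sq_cpow hs (f := fun p => (sin (n * latticeAngle p.1) : ℂ) ^ 2)
    fun p => norm_ofReal_sq_le_one (abs_sin_le_one _)
  rw [latC, latS, latC, ← hC.tsum_add hS]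
  refine tsum_congr fun p => ?_
  rw [← add_div, pow_zero]
  congr 1
  exact_mod_cast cos_sq_add_sin_sq _

/-- For every positive integer `m` and `s` with `Re s > 1`,
`𝒞(2, 2m-1; s) = 𝒮(2, 2m-1; s) = (1/2) 𝒞(0,1;s)`. -/
theorem latC_two_odd_eq (m : ℕ) (hm : 1 ≤ m) (s : ℂ) (hs : 1 < s.re) :
    latC 2 (2 * m - 1) s = latS 2 (2 * m - 1) s ∧
      latC 2 (2 * m - 1) s = (1 / 2) * latC 0 1 s := by
  have hCS := latC_two_eq_latS_two_of_odd (n := 2 * m - 1) ⟨m - 1, by omega⟩ s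
  refine ⟨hCS, ?_⟩
  have hsum := latC_two_add_latS_two (2 * m - 1) hs
  rw [← hCS] at hsum
  linear_combination hsum / 2
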